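/- arXiv:2304.03338 — 5 statements merged into one kernel-verified Lean document; each statement's English description precedes it below -/
import Mathlib

section
/- If a formal context (G,M,I) admits an ordinal two-factorization, i.e., there exist Ferrers relations F1, F2 ⊆ G × M with F1 ∪ F2 = I, then the incompatibility graph of (G,M,I) is bipartite (2-colorable). In particular, two incompatible incidence pairs can never belong to the same Ferrers relation contained in I. -/
/-!
A Ferrers relation `F ⊆ I` contains no incompatible pair `(g,m), (h,n)`: the Ferrers
condition puts `(g,n)` or `(h,m)` into `F ⊆ I`. Hence `F1` and `F2` are independent sets of
the incompatibility graph, and since they cover `I`, membership in `F1` is a proper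
2-colouring.
-/

set_option linter.unnecessarySimpa false

/-- A Ferrers relation: whenever `(g,m) ∈ F` and `(h,n) ∈ F`,
then `(g,n) ∈ F` or `(h,m) ∈ F`. -/
def IsFerrers {G M : Type*} (F : Set (G × M)) : Prop :=
  ∀ g h : G, ∀ m n : M, (g, m) ∈ F → (h, n) ∈ F → (g, n) ∈ F ∨ (h, m) ∈ F

/-- Two pairs `p, q ∈ I` are incompatible if `(p.1, q.2) ∉ I` and `(q.1, p.2) ∉ I`. -/
def Incompatible {G M : Type*} (I : Set (G × M)) (p q : G × M) : Prop :=
  p ∈ I ∧ q ∈ I ∧ (p.1, q.2) ∉ I ∧ (q.1, p.2) ∉ I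

/-- The incompatibility graph of a formal context `(G, M, I)`: vertices are the
elements of `I`, with an edge between each pair of incompatible elements. -/
def IncompGraph {G M : Type*} (I : Set (G × M)) : SimpleGraph I where
  Adj p q := Incompatible I p.1 q.1
  symm := ⟨fun _ _ h => ⟨h.2.1, h.1, h.2.2.2, h.2.2.1⟩⟩
  loopless := ⟨fun p h => h.2.2.1 (by simpa using h.1)⟩

namespace SimpleGraph

variable {V : Type*} {G : SimpleGraph V}

theorem isBipartite_of_isIndepSet_of_union_eq_univ {s t : Set V} (hs : G.IsIndepSet s)
    (ht : G.IsIndepSet t) (hst : s ∪ t = Set.univ) : G.IsBipartite := by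
  have hcover (v : V) : v ∈ s ∨ v ∈ t := by simp [← Set.mem_union, hst]
  refine IsBipartiteWith.isBipartite (s := s) (t := sᶜ) ⟨disjoint_compl_right, fun v w hvw => ?_⟩
  by_cases hv : v ∈ s
  · exact .inl ⟨hv, fun hw => hs hv hw hvw.ne hvw⟩
  · have hvt := (hcover v).resolve_left hv
    exact .inr ⟨hv, (hcover w).resolve_right fun hwt => ht hvt hwt hvw.ne hvw⟩

end SimpleGraph

theorem IsFerrers.not_incompatible {G M : Type*} {I F : Set (G × M)} (hF : IsFerrers F)
    (hFI : F ⊆ I) {p q : G × M} (hp : p ∈ F) (hq : q ∈ F) : ¬Incompatible I p q :=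
  fun ⟨_, _, hpq, hqp⟩ => (hF p.1 q.1 p.2 q.2 hp hq).elim (hpq <| hFI ·) (hqp <| hFI ·)

theorem IsFerrers.isIndepSet_incompGraph {G M : Type*} {I F : Set (G × M)} (hF : IsFerrers F)
    (hFI : F ⊆ I) : (IncompGraph I).IsIndepSet {p | p.1 ∈ F} :=
  fun _ hp _ hq _ => hF.not_incompatible hFI hp hq

/-- If a formal context `(G, M, I)` admits an ordinal two-factorization, then its
incompatibility graph is bipartite (2-colorable); and two incompatible pairs can
never belong to the same Ferrers relation contained in `I`. -/
theorem ordinal_two_factorization_implies_bipartite {G M : Type*}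
    (I F1 F2 : Set (G × M)) (hF1 : IsFerrers F1) (hF2 : IsFerrers F2)
    (hUnion : F1 ∪ F2 = I) :
    (IncompGraph I).Colorable 2 ∧
      ∀ F : Set (G × M), IsFerrers F → F ⊆ I →
        ∀ p q : G × M, Incompatible I p q → ¬(p ∈ F ∧ q ∈ F) := by
  have hF1I : F1 ⊆ I := hUnion ▸ Set.subset_union_left
  have hF2I : F2 ⊆ I := hUnion ▸ Set.subset_union_right
  have hcover : {p : I | p.1 ∈ F1} ∪ {p | p.1 ∈ F2} = Set.univ :=
    Set.eq_univ_of_forall fun p => (hUnion ▸ p.2 : p.1 ∈ F1 ∪ F2)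
  refine ⟨SimpleGraph.isBipartite_of_isIndepSet_of_union_eq_univ
    (hF1.isIndepSet_incompGraph hF1I) (hF2.isIndepSet_incompGraph hF2I) hcover, ?_⟩
  exact fun F hF hFI p q hpq ⟨hp, hq⟩ => hF.not_incompatible hFI hp hq hpq
end

section
/- Let (G,M,I) be a formal context and let F1, F2 be an ordinal two-factorization of (G,M,I). Then every element (g,m) ∈ F1 ∩ F2 is an isolated vertex of the incompatibility graph of (G,M,I), i.e., there is no (h,n) ∈ I that is incompatible with (g,m). -/
/-- If `F1, F2` is an ordinal two-factorization of `(G, M, I)`, then every element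
of `F1 ∩ F2` is an isolated vertex of the incompatibility graph: no element of `I`
is incompatible with it. -/
theorem mem_inter_factors_isolated {G M : Type*}
    (I F1 F2 : Set (G × M)) (hF1 : IsFerrers F1) (hF2 : IsFerrers F2)
    (hUnion : F1 ∪ F2 = I) :
    ∀ p ∈ F1 ∩ F2, ∀ q : G × M, ¬ Incompatible I p q := by
  rintro p ⟨hp1, hp2⟩ q ⟨-, hq, hpq, hqp⟩
  rw [← hUnion] at hq
  rcases hq with hq | hq
  · rcases hF1 p.1 q.1 p.2 q.2 hp1 hq with h | h
    · exact hpq (hUnion ▸ Set.mem_union_left _ h)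
    · exact hqp (hUnion ▸ Set.mem_union_left _ h)
  · rcases hF2 p.1 q.1 p.2 q.2 hp2 hq with h | h
    · exact hpq (hUnion ▸ Set.mem_union_right _ h)
    · exact hqp (hUnion ▸ Set.mem_union_right _ h)
end

section
/- Let (G,M,I) be a formal context with an ordinal two-factorization F1, F2, and let C be the set of all elements of I that are incompatible with no element of I. Then F1 ∪ C and F2 ∪ C are again Ferrers relations, so F1 ∪ C, F2 ∪ C is also an ordinal two-factorization of (G,M,I). -/
/-- Auxiliary case: `(g,m) ∈ C`, `(h,n) ∈ F1`. -/
lemma ferrers_case2 {G M : Type*}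
    (I F1 F2 C : Set (G × M)) (hF1 : IsFerrers F1) (hF2 : IsFerrers F2)
    (hsub1 : F1 ⊆ I) (hsub2 : F2 ⊆ I)
    (hmem : ∀ z : G × M, z ∈ I → z ∈ F1 ∨ z ∈ F2)
    (hcompat : ∀ a c : G, ∀ b d : M, (a, b) ∈ C → (c, d) ∈ I → (a, d) ∈ I ∨ (c, b) ∈ I)
    (hnotC : ∀ a : G, ∀ b : M, (a, b) ∈ I → (a, b) ∉ C →
      ∃ c : G, ∃ d : M, (c, d) ∈ I ∧ (a, d) ∉ I ∧ (c, b) ∉ I)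
    (g h : G) (m n : M)
    (hx : (g, m) ∈ C) (hy : (h, n) ∈ F1)
    (hgnF1 : (g, n) ∉ F1) (hgnC : (g, n) ∉ C)
    (hhmF1 : (h, m) ∉ F1) (hhmC : (h, m) ∉ C) : False := by
  by_cases hgnI : (g, n) ∈ I
  · have hgnF2 : (g, n) ∈ F2 := (hmem _ hgnI).resolve_left hgnF1
    obtain ⟨a, b, habI, hgb, han⟩ := hnotC g n hgnI hgnC
    have habF1 : (a, b) ∈ F1 := by
      rcases hmem _ habI with h1 | h2
      · exact h1
      · rcases hF2 g a n b hgnF2 h2 with h' | h'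
        · exact absurd (hsub2 h') hgb
        · exact absurd (hsub2 h') han
    have hhbF1 : (h, b) ∈ F1 := by
      rcases hF1 h a n b hy habF1 with h' | h'
      · exact h'
      · exact absurd (hsub1 h') han
    have hhmI : (h, m) ∈ I := by
      rcases hcompat g h m b hx (hsub1 hhbF1) with h' | h'
      · exact absurd h' hgb
      · exact h'
    obtain ⟨c, d, hcdI, hhd, hcm⟩ := hnotC h m hhmI hhmC
    have hhmF2 : (h, m) ∈ F2 := (hmem _ hhmI).resolve_left hhmF1
    have hcdF1 : (c, d) ∈ F1 := by
      rcases hmem _ hcdI with h1 | h2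
      · exact h1
      · rcases hF2 h c m d hhmF2 h2 with h' | h'
        · exact absurd (hsub2 h') hhd
        · exact absurd (hsub2 h') hcm
    have hcbF1 : (c, b) ∈ F1 := by
      rcases hF1 c h d b hcdF1 hhbF1 with h' | h'
      · exact h'
      · exact absurd (hsub1 h') hhd
    rcases hcompat g c m b hx (hsub1 hcbF1) with h' | h'
    · exact hgb h'
    · exact hcm h'
  · have hhmI : (h, m) ∈ I := by
      rcases hcompat g h m n hx (hsub1 hy) with h' | h'
      · exact absurd h' hgnI
      · exact h'
    obtain ⟨c, d, hcdI, hhd, hcm⟩ := hnotC h m hhmI hhmC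
    have hhmF2 : (h, m) ∈ F2 := (hmem _ hhmI).resolve_left hhmF1
    have hcdF1 : (c, d) ∈ F1 := by
      rcases hmem _ hcdI with h1 | h2
      · exact h1
      · rcases hF2 h c m d hhmF2 h2 with h' | h'
        · exact absurd (hsub2 h') hhd
        · exact absurd (hsub2 h') hcm
    have hcnF1 : (c, n) ∈ F1 := by
      rcases hF1 c h d n hcdF1 hy with h' | h'
      · exact h'
      · exact absurd (hsub1 h') hhd
    rcases hcompat g c m n hx (hsub1 hcnF1) with h' | h'
    · exact hgnI h'
    · exact hcm h'

/-- Auxiliary case: `(g,m) ∈ C`, `(h,n) ∈ C`, `(g,n) ∈ I`. -/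
lemma ferrers_case3 {G M : Type*}
    (I F1 F2 C : Set (G × M)) (hF1 : IsFerrers F1) (hF2 : IsFerrers F2)
    (hsub1 : F1 ⊆ I) (hsub2 : F2 ⊆ I)
    (hmem : ∀ z : G × M, z ∈ I → z ∈ F1 ∨ z ∈ F2)
    (hcompat : ∀ a c : G, ∀ b d : M, (a, b) ∈ C → (c, d) ∈ I → (a, d) ∈ I ∨ (c, b) ∈ I)
    (hnotC : ∀ a : G, ∀ b : M, (a, b) ∈ I → (a, b) ∉ C →
      ∃ c : G, ∃ d : M, (c, d) ∈ I ∧ (a, d) ∉ I ∧ (c, b) ∉ I)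
    (g h : G) (m n : M)
    (hx : (g, m) ∈ C) (hy : (h, n) ∈ C)
    (hgnF1 : (g, n) ∉ F1) (hgnC : (g, n) ∉ C)
    (hhmF1 : (h, m) ∉ F1) (hhmC : (h, m) ∉ C)
    (hgnI : (g, n) ∈ I) : False := by
  have hgnF2 : (g, n) ∈ F2 := (hmem _ hgnI).resolve_left hgnF1
  obtain ⟨a, b, habI, hgb, han⟩ := hnotC g n hgnI hgnC
  have habF1 : (a, b) ∈ F1 := by
    rcases hmem _ habI with h1 | h2
    · exact h1
    · rcases hF2 g a n b hgnF2 h2 with h' | h'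
      · exact absurd (hsub2 h') hgb
      · exact absurd (hsub2 h') han
  have hamI : (a, m) ∈ I := (hcompat g a m b hx habI).resolve_left hgb
  have hhbI : (h, b) ∈ I := (hcompat h a n b hy habI).resolve_right han
  have hhmI : (h, m) ∈ I := (hcompat g h m b hx hhbI).resolve_left hgb
  have hhmF2 : (h, m) ∈ F2 := (hmem _ hhmI).resolve_left hhmF1
  obtain ⟨c, d, hcdI, hhd, hcm⟩ := hnotC h m hhmI hhmC
  have hcdF1 : (c, d) ∈ F1 := by
    rcases hmem _ hcdI with h1 | h2
    · exact h1
    · rcases hF2 h c m d hhmF2 h2 with h' | h'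
      · exact absurd (hsub2 h') hhd
      · exact absurd (hsub2 h') hcm
  rcases hmem _ hamI with ham1 | ham2
  · have hadF1 : (a, d) ∈ F1 := by
      rcases hF1 a c m d ham1 hcdF1 with h' | h'
      · exact h'
      · exact absurd (hsub1 h') hcm
    rcases hcompat h a n d hy (hsub1 hadF1) with h' | h'
    · exact hhd h'
    · exact han h'
  · have hcnI : (c, n) ∈ I := (hcompat h c n d hy hcdI).resolve_left hhd
    rcases hmem _ hcnI with hcn1 | hcn2
    · have hcbF1 : (c, b) ∈ F1 := by
        rcases hF1 c a n b hcn1 habF1 with h' | h'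
        · exact h'
        · exact absurd (hsub1 h') han
      rcases hcompat g c m b hx (hsub1 hcbF1) with h' | h'
      · exact hgb h'
      · exact hcm h'
    · rcases hF2 c a n m hcn2 ham2 with h' | h'
      · exact hcm (hsub2 h')
      · exact han (hsub2 h')

/-- Abstract form: adding `C` to `F1` preserves the Ferrers property. -/
lemma ferrers_union_aux {G M : Type*}
    (I F1 F2 C : Set (G × M)) (hF1 : IsFerrers F1) (hF2 : IsFerrers F2)
    (hsub1 : F1 ⊆ I) (hsub2 : F2 ⊆ I) (hCI : C ⊆ I)
    (hmem : ∀ z : G × M, z ∈ I → z ∈ F1 ∨ z ∈ F2)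
    (hcompat : ∀ a c : G, ∀ b d : M, (a, b) ∈ C → (c, d) ∈ I → (a, d) ∈ I ∨ (c, b) ∈ I)
    (hnotC : ∀ a : G, ∀ b : M, (a, b) ∈ I → (a, b) ∉ C →
      ∃ c : G, ∃ d : M, (c, d) ∈ I ∧ (a, d) ∉ I ∧ (c, b) ∉ I) :
    IsFerrers (F1 ∪ C) := by
  intro g h m n hgm hhn
  by_contra hcon
  push_neg at hcon
  obtain ⟨hgn, hhm⟩ := hcon
  have hgnF1 : (g, n) ∉ F1 := fun h' => hgn (Set.mem_union_left _ h')
  have hgnC : (g, n) ∉ C := fun h' => hgn (Set.mem_union_right _ h')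
  have hhmF1 : (h, m) ∉ F1 := fun h' => hhm (Set.mem_union_left _ h')
  have hhmC : (h, m) ∉ C := fun h' => hhm (Set.mem_union_right _ h')
  rcases hgm with hgm1 | hgm2 <;> rcases hhn with hhn1 | hhn2
  · rcases hF1 g h m n hgm1 hhn1 with h' | h'
    · exact hgnF1 h'
    · exact hhmF1 h'
  · exact ferrers_case2 I F1 F2 C hF1 hF2 hsub1 hsub2 hmem hcompat hnotC h g n m
      hhn2 hgm1 hhmF1 hhmC hgnF1 hgnC
  · exact ferrers_case2 I F1 F2 C hF1 hF2 hsub1 hsub2 hmem hcompat hnotC g h m n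
      hgm2 hhn1 hgnF1 hgnC hhmF1 hhmC
  · rcases hcompat g h m n hgm2 (hCI hhn2) with hgnI | hhmI
    · exact ferrers_case3 I F1 F2 C hF1 hF2 hsub1 hsub2 hmem hcompat hnotC g h m n
        hgm2 hhn2 hgnF1 hgnC hhmF1 hhmC hgnI
    · exact ferrers_case3 I F1 F2 C hF1 hF2 hsub1 hsub2 hmem hcompat hnotC h g n m
        hhn2 hgm2 hhmF1 hhmC hgnF1 hgnC hhmI

/-- Let `F1, F2` be an ordinal two-factorization of `(G, M, I)` and let `C` be the
set of all elements of `I` that are incompatible with no element of `I`.  Then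
`F1 ∪ C, F2 ∪ C` is again an ordinal two-factorization of `(G, M, I)`. -/
theorem union_isolated_still_factorization {G M : Type*}
    (I F1 F2 : Set (G × M)) (hF1 : IsFerrers F1) (hF2 : IsFerrers F2)
    (hUnion : F1 ∪ F2 = I)
    (C : Set (G × M)) (hC : C = {p ∈ I | ∀ q : G × M, ¬ Incompatible I p q}) :
    IsFerrers (F1 ∪ C) ∧ IsFerrers (F2 ∪ C) ∧ (F1 ∪ C) ∪ (F2 ∪ C) = I := by
  have hsub1 : F1 ⊆ I := by rw [← hUnion]; exact Set.subset_union_left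
  have hsub2 : F2 ⊆ I := by rw [← hUnion]; exact Set.subset_union_right
  have hmem12 : ∀ z : G × M, z ∈ I → z ∈ F1 ∨ z ∈ F2 := by
    intro z hz; rw [← hUnion] at hz; exact hz
  have hmem21 : ∀ z : G × M, z ∈ I → z ∈ F2 ∨ z ∈ F1 := fun z hz => (hmem12 z hz).symm
  have hCI : C ⊆ I := by
    intro p hp; rw [hC] at hp; exact hp.1
  have hcompat : ∀ a c : G, ∀ b d : M, (a, b) ∈ C → (c, d) ∈ I →
      (a, d) ∈ I ∨ (c, b) ∈ I := by
    intro a c b d hab hcd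
    rw [hC] at hab
    by_contra hno
    push_neg at hno
    exact hab.2 (c, d) ⟨hab.1, hcd, hno.1, hno.2⟩
  have hnotC : ∀ a : G, ∀ b : M, (a, b) ∈ I → (a, b) ∉ C →
      ∃ c : G, ∃ d : M, (c, d) ∈ I ∧ (a, d) ∉ I ∧ (c, b) ∉ I := by
    intro a b hI hn
    rw [hC] at hn
    have hq : ∃ q : G × M, Incompatible I (a, b) q := by
      by_contra h'
      push_neg at h'
      exact hn ⟨hI, h'⟩
    obtain ⟨⟨c, d⟩, hq⟩ := hq
    exact ⟨c, d, hq.2.1, hq.2.2.1, hq.2.2.2⟩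
  refine ⟨ferrers_union_aux I F1 F2 C hF1 hF2 hsub1 hsub2 hCI hmem12 hcompat hnotC,
    ferrers_union_aux I F2 F1 C hF2 hF1 hsub2 hsub1 hCI hmem21 hcompat hnotC, ?_⟩
  apply Set.Subset.antisymm
  · exact Set.union_subset (Set.union_subset hsub1 hCI) (Set.union_subset hsub2 hCI)
  · intro z hz
    rcases hmem12 z hz with h1 | h2
    · exact Set.mem_union_left _ (Set.mem_union_left _ h1)
    · exact Set.mem_union_right _ (Set.mem_union_left _ h2)
end

section
/- Let (G,M,I) be a formal context that admits an ordinal two-factorization, and let C be the set of all elements of I that are incompatible with no element of I (the isolated vertices of the incompatibility graph). Then there is a partition of I into three pairwise disjoint sets F1, F2, C such that both F1 ∪ C and F2 ∪ C are Ferrers relations. -/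
section Aux

variable {G M : Type*} (I U S C : Set (G × M))

/-- Compatibility of isolated pairs. -/
lemma compat_of_isolated (hC : C = {p ∈ I | ∀ q : G × M, ¬ Incompatible I p q})
    {p : G × M} (hp : p ∈ C) {q : G × M} (hq : q ∈ I) :
    (p.1, q.2) ∈ I ∨ (q.1, p.2) ∈ I := by
  rw [hC] at hp
  obtain ⟨hpI, h⟩ := hp
  by_contra hcon
  push_neg at hcon
  exact h q ⟨hpI, hq, hcon.1, hcon.2⟩

/-- Step 1: one cross pair in `I` yields the other cross pair in `I`
and a witness in `U`. -/
lemma key_step1 (hC : C = {p ∈ I | ∀ q : G × M, ¬ Incompatible I p q})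
    (hU : IsFerrers U) (hUI : U ⊆ I) (hSUC : S ⊆ U ∪ C) (hCS : C ⊆ S)
    (hW : ∀ z ∈ I, z ∉ S → ∀ r : G × M, Incompatible I z r → r ∈ U)
    (g h : G) (m n : M) (hp : (g, m) ∈ S) (hq : (h, n) ∈ S)
    (hx : (g, n) ∉ S) (hgn : (g, n) ∈ I) :
    (h, m) ∈ I ∧ ∃ a : G, ∃ b : M, (a, b) ∈ U ∧ (g, b) ∉ I ∧ (a, n) ∉ I := by
  have hxC : (g, n) ∉ C := fun hc => hx (hCS hc)
  rw [hC] at hxC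
  simp only [Set.mem_setOf_eq, not_and, not_forall, not_not] at hxC
  obtain ⟨r, hr⟩ := hxC hgn
  obtain ⟨a, b⟩ := r
  obtain ⟨_, hrI, hgb, han⟩ := hr
  have hrU : (a, b) ∈ U := hW _ hgn hx _ ⟨hgn, hrI, hgb, han⟩
  refine ⟨?_, a, b, hrU, hgb, han⟩
  rcases hSUC hp with hpU | hpC
  · rcases hSUC hq with hqU | hqC
    · -- p ∈ U, q ∈ U
      have hhb : (h, b) ∈ U := by
        rcases hU h a n b hqU hrU with h1 | h1
        · exact h1
        · exact absurd (hUI h1) han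
      rcases hU g h m b hpU hhb with h1 | h1
      · exact absurd (hUI h1) hgb
      · exact hUI h1
    · -- p ∈ U, q ∈ C
      have ham : (a, m) ∈ U := by
        rcases hU g a m b hpU hrU with h1 | h1
        · exact absurd (hUI h1) hgb
        · exact h1
      rcases compat_of_isolated I C hC hqC (hUI ham) with h1 | h1
      · exact h1
      · exact absurd h1 han
  · -- p ∈ C
    have hhb : (h, b) ∈ I := by
      rcases hSUC hq with hqU | hqC
      · rcases hU h a n b hqU hrU with h1 | h1
        · exact hUI h1
        · exact absurd (hUI h1) han
      · rcases compat_of_isolated I C hC hqC (hUI hrU) with h1 | h1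
        · exact h1
        · exact absurd h1 han
    rcases compat_of_isolated I C hC hpC hhb with h1 | h1
    · exact absurd h1 hgb
    · exact h1

/-- Key lemma: under the witness condition, `S` is a Ferrers relation. -/
lemma key_lemma (hC : C = {p ∈ I | ∀ q : G × M, ¬ Incompatible I p q})
    (hU : IsFerrers U) (hUI : U ⊆ I) (hSUC : S ⊆ U ∪ C) (hCS : C ⊆ S)
    (hW : ∀ z ∈ I, z ∉ S → ∀ r : G × M, Incompatible I z r → r ∈ U) :
    IsFerrers S := by
  have hCI : C ⊆ I := by
    rw [hC]; exact fun p hp => hp.1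
  have hSI : S ⊆ I := fun p hp => by
    rcases hSUC hp with h1 | h1
    · exact hUI h1
    · exact hCI h1
  intro g h m n hp hq
  by_contra hcon
  push_neg at hcon
  obtain ⟨hx, hy⟩ := hcon
  -- at least one cross pair is in I
  have h0 : (g, n) ∈ I ∨ (h, m) ∈ I := by
    rcases hSUC hp with hpU | hpC
    · rcases hSUC hq with hqU | hqC
      · rcases hU g h m n hpU hqU with h1 | h1
        · exact Or.inl (hUI h1)
        · exact Or.inr (hUI h1)
      · rcases compat_of_isolated I C hC hqC (hSI hp) with h1 | h1
        · exact Or.inr h1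
        · exact Or.inl h1
    · rcases compat_of_isolated I C hC hpC (hSI hq) with h1 | h1
      · exact Or.inl h1
      · exact Or.inr h1
  -- both cross pairs are in I, with witnesses r, s ∈ U
  have hboth : (g, n) ∈ I ∧ (h, m) ∈ I := by
    rcases h0 with h1 | h1
    · exact ⟨h1, (key_step1 I U S C hC hU hUI hSUC hCS hW g h m n hp hq hx h1).1⟩
    · exact ⟨(key_step1 I U S C hC hU hUI hSUC hCS hW h g n m hq hp hy h1).1, h1⟩
  obtain ⟨hgn, hhm⟩ := hboth
  obtain ⟨-, a, b, hrU, hgb, han⟩ :=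
    key_step1 I U S C hC hU hUI hSUC hCS hW g h m n hp hq hx hgn
  obtain ⟨-, c, d, hsU, hhd, hcm⟩ :=
    key_step1 I U S C hC hU hUI hSUC hCS hW h g n m hq hp hy hhm
  rcases hU a c b d hrU hsU with had | hcb
  · -- (a,d) ∈ U contradicts q
    rcases hSUC hq with hqU | hqC
    · rcases hU h a n d hqU had with h1 | h1
      · exact hhd (hUI h1)
      · exact han (hUI h1)
    · rcases compat_of_isolated I C hC hqC (hUI had) with h1 | h1
      · exact hhd h1
      · exact han h1
  · -- (c,b) ∈ U contradicts p
    rcases hSUC hp with hpU | hpC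
    · rcases hU g c m b hpU hcb with h1 | h1
      · exact hgb (hUI h1)
      · exact hcm (hUI h1)
    · rcases compat_of_isolated I C hC hpC (hUI hcb) with h1 | h1
      · exact hgb h1
      · exact hcm h1

end Aux

/-- Let `(G, M, I)` be a formal context admitting an ordinal two-factorization and
let `C` be the set of all elements of `I` incompatible with no element of `I`.
Then `I` partitions into pairwise disjoint sets `F1`, `F2`, `C` such that both
`F1 ∪ C` and `F2 ∪ C` are Ferrers relations. -/
theorem partition_into_factors_and_isolated {G M : Type*}
    (I : Set (G × M))
    (hfact : ∃ F1 F2 : Set (G × M), IsFerrers F1 ∧ IsFerrers F2 ∧ F1 ∪ F2 = I)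
    (C : Set (G × M)) (hC : C = {p ∈ I | ∀ q : G × M, ¬ Incompatible I p q}) :
    ∃ F1 F2 : Set (G × M),
      Disjoint F1 F2 ∧ Disjoint F1 C ∧ Disjoint F2 C ∧
      F1 ∪ F2 ∪ C = I ∧ IsFerrers (F1 ∪ C) ∧ IsFerrers (F2 ∪ C) := by
  obtain ⟨F, Gf, hF, hGf, hFG⟩ := hfact
  have hFI : F ⊆ I := hFG ▸ Set.subset_union_left
  have hGI : Gf ⊆ I := hFG ▸ Set.subset_union_right
  have hCI : C ⊆ I := by rw [hC]; exact fun p hp => hp.1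
  refine ⟨F \ C, I \ (F ∪ C), ?_, ?_, ?_, ?_, ?_, ?_⟩
  · exact Set.disjoint_left.mpr fun p hp hq => hq.2 (Or.inl hp.1)
  · exact Set.disjoint_left.mpr fun p hp hq => hp.2 hq
  · exact Set.disjoint_left.mpr fun p hp hq => hp.2 (Or.inr hq)
  · ext p
    constructor
    · rintro ((⟨h1, -⟩ | ⟨h1, -⟩) | h1)
      · exact hFI h1
      · exact h1
      · exact hCI h1
    · intro hp
      by_cases hc : p ∈ C
      · exact Or.inr hc
      · by_cases hf : p ∈ F
        · exact Or.inl (Or.inl ⟨hf, hc⟩)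
        · exact Or.inl (Or.inr ⟨hp, fun h1 => h1.elim hf hc⟩)
  · -- (F \ C) ∪ C = F ∪ C is Ferrers
    have heq : (F \ C) ∪ C = F ∪ C := by
      ext p
      constructor
      · rintro (⟨h1, -⟩ | h1)
        · exact Or.inl h1
        · exact Or.inr h1
      · intro hp
        by_cases hc : p ∈ C
        · exact Or.inr hc
        · rcases hp with h1 | h1
          · exact Or.inl ⟨h1, hc⟩
          · exact absurd h1 hc
    rw [heq]
    refine key_lemma I F (F ∪ C) C hC hF hFI Set.Subset.rfl ?_ ?_
    · exact Set.subset_union_right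
    · -- witness condition: any incompatible witness of z ∉ F ∪ C lies in F
      intro z hzI hzS r hr
      obtain ⟨-, hrI, h1, h2⟩ := hr
      have hzG : z ∈ Gf := by
        rcases (hFG ▸ hzI : z ∈ F ∪ Gf) with h | h
        · exact absurd (Or.inl h) hzS
        · exact h
      rcases (hFG ▸ hrI : r ∈ F ∪ Gf) with h | h
      · exact h
      · rcases hGf z.1 r.1 z.2 r.2 (by simpa using hzG) (by simpa using h) with h3 | h3
        · exact absurd (hGI h3) h1
        · exact absurd (hGI h3) h2
  · -- (I \ (F ∪ C)) ∪ C = (I \ F) ∪ C is Ferrers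
    have heq : (I \ (F ∪ C)) ∪ C = (I \ F) ∪ C := by
      ext p
      constructor
      · rintro (⟨h1, h2⟩ | h1)
        · exact Or.inl ⟨h1, fun h => h2 (Or.inl h)⟩
        · exact Or.inr h1
      · intro hp
        by_cases hc : p ∈ C
        · exact Or.inr hc
        · rcases hp with ⟨h1, h2⟩ | h1
          · exact Or.inl ⟨h1, fun h => h.elim h2 hc⟩
          · exact absurd h1 hc
    rw [heq]
    refine key_lemma I Gf ((I \ F) ∪ C) C hC hGf hGI ?_ ?_ ?_
    · intro p hp
      rcases hp with ⟨h1, h2⟩ | h1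
      · rcases (hFG ▸ h1 : p ∈ F ∪ Gf) with h | h
        · exact absurd h h2
        · exact Or.inl h
      · exact Or.inr h1
    · exact Set.subset_union_right
    · -- witness condition: any incompatible witness of z ∉ (I \ F) ∪ C lies in Gf
      intro z hzI hzS r hr
      obtain ⟨-, hrI, h1, h2⟩ := hr
      have hzF : z ∈ F := by
        by_contra hzf
        exact hzS (Or.inl ⟨hzI, hzf⟩)
      rcases (hFG ▸ hrI : r ∈ F ∪ Gf) with h | h
      · rcases hF z.1 r.1 z.2 r.2 (by simpa using hzF) (by simpa using h) with h3 | h3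
        · exact absurd (hFI h3) h1
        · exact absurd (hFI h3) h2
      · exact h
end

section
/- Let (G,M,I) be a formal context, let ≤ be the order on the formal concepts of the complement context (G,M,(G×M)\I), and let ≺ be a conjugate order for ≤, i.e., an irreflexive transitive relation on the concepts such that two distinct concepts x, y are incomparable with respect to ≤ if and only if exactly one of x ≺ y or y ≺ x holds. Define F1 as the set of all (g,m) ∈ G × M for which there exist no concepts (A,B), (C,D) of the complement context with g ∈ A, m ∈ D, and ((A,B) ≤ (C,D) or (A,B) ≺ (C,D)); define F2 analogously with ≺ replaced by its reverse (i.e., requiring (A,B) ≤ (C,D) or (C,D) ≺ (A,B)). Then F1 and F2 are Ferrers relations and F1 ∪ F2 = I, i.e., F1, F2 is an ordinal two-factorization of (G,M,I). -/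
/-- Derivation operator on object sets: `A' = {m | ∀ g ∈ A, (g,m) ∈ I}`. -/
def DerivObj {G M : Type*} (I : Set (G × M)) (A : Set G) : Set M :=
  {m | ∀ g ∈ A, (g, m) ∈ I}

/-- Derivation operator on attribute sets: `B' = {g | ∀ m ∈ B, (g,m) ∈ I}`. -/
def DerivAttr {G M : Type*} (I : Set (G × M)) (B : Set M) : Set G :=
  {g | ∀ m ∈ B, (g, m) ∈ I}

/-- A formal concept of the context `(G, M, I)`: a pair `(A, B)` with `A' = B`
and `B' = A`. -/
def IsConcept {G M : Type*} (I : Set (G × M)) (x : Set G × Set M) : Prop :=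
  DerivObj I x.1 = x.2 ∧ DerivAttr I x.2 = x.1

namespace TF
variable {G M : Type*}

lemma derivObj_anti (J : Set (G × M)) {A B : Set G} (h : A ⊆ B) :
    DerivObj J B ⊆ DerivObj J A := fun m hm g hg => hm g (h hg)

lemma derivAttr_anti (J : Set (G × M)) {A B : Set M} (h : A ⊆ B) :
    DerivAttr J B ⊆ DerivAttr J A := fun g hg m hm => hg m (h hm)

lemma sub_AO (J : Set (G × M)) (A : Set G) : A ⊆ DerivAttr J (DerivObj J A) :=
  fun g hg m hm => hm g hg

lemma sub_OA (J : Set (G × M)) (B : Set M) : B ⊆ DerivObj J (DerivAttr J B) :=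
  fun m hm g hg => hg m hm

/-- object concept of `g`. -/
def objC (J : Set (G × M)) (g : G) : Set G × Set M :=
  (DerivAttr J (DerivObj J {g}), DerivObj J {g})

/-- attribute concept of `m`. -/
def attrC (J : Set (G × M)) (m : M) : Set G × Set M :=
  (DerivAttr J {m}, DerivObj J (DerivAttr J {m}))

lemma objC_concept (J : Set (G × M)) (g : G) : IsConcept J (objC J g) := by
  refine ⟨Set.Subset.antisymm ?_ (sub_OA J _), rfl⟩
  exact derivObj_anti J (sub_AO J {g})

lemma attrC_concept (J : Set (G × M)) (m : M) : IsConcept J (attrC J m) := by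
  refine ⟨rfl, Set.Subset.antisymm ?_ (sub_AO J _)⟩
  exact derivAttr_anti J (sub_OA J {m})

lemma mem_objC (J : Set (G × M)) (g : G) : g ∈ (objC J g).1 :=
  sub_AO J {g} rfl

lemma mem_attrC (J : Set (G × M)) (m : M) : m ∈ (attrC J m).2 :=
  sub_OA J {m} rfl

lemma objC_min (J : Set (G × M)) {x : Set G × Set M} (hx : IsConcept J x) {g : G}
    (hg : g ∈ x.1) : (objC J g).1 ⊆ x.1 := by
  have h1 : x.2 ⊆ DerivObj J {g} := by
    rw [← hx.1]; exact derivObj_anti J (Set.singleton_subset_iff.2 hg)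
  calc (objC J g).1 ⊆ DerivAttr J x.2 := derivAttr_anti J h1
    _ = x.1 := hx.2

lemma attrC_max (J : Set (G × M)) {y : Set G × Set M} (hy : IsConcept J y) {m : M}
    (hm : m ∈ y.2) : y.1 ⊆ (attrC J m).1 := by
  rw [← hy.2]; exact derivAttr_anti J (Set.singleton_subset_iff.2 hm)

lemma mem_attrC_iff (J : Set (G × M)) (g : G) (m : M) :
    g ∈ (attrC J m).1 ↔ (g, m) ∈ J := by
  constructor
  · intro h; exact h m rfl
  · intro h m' hm'; cases hm'; exact h

lemma concept_ext (J : Set (G × M)) {x y : Set G × Set M} (hx : IsConcept J x)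
    (hy : IsConcept J y) (h : x.1 = y.1) : x = y := by
  have : x.2 = y.2 := by rw [← hx.1, ← hy.1, h]
  exact Prod.ext h this

section Conj
variable (J : Set (G × M)) (q : Set G × Set M → Set G × Set M → Prop)
  (hirr : ∀ x, IsConcept J x → ¬ q x x)
  (htr : ∀ x y z, IsConcept J x → IsConcept J y → IsConcept J z →
    q x y → q y z → q x z)
  (hc : ∀ x y, IsConcept J x → IsConcept J y → x ≠ y →
    ((¬ x.1 ⊆ y.1 ∧ ¬ y.1 ⊆ x.1) ↔ Xor' (q x y) (q y x)))

include hirr htr hc in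
lemma incomp_of_q {x y : Set G × Set M} (hx : IsConcept J x) (hy : IsConcept J y)
    (h : q x y) : ¬ x.1 ⊆ y.1 ∧ ¬ y.1 ⊆ x.1 := by
  have hne : x ≠ y := by rintro rfl; exact hirr x hx h
  by_contra hcon
  have hcomp : x.1 ⊆ y.1 ∨ y.1 ⊆ x.1 := by tauto
  have hnx : ¬ Xor' (q x y) (q y x) := by
    rw [← hc x y hx hy hne]; tauto
  have hyx : q y x := by
    by_contra hyx
    exact hnx (Or.inl ⟨h, hyx⟩)
  exact hirr x hx (htr x y x hx hy hx h hyx)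

include hirr htr hc in
lemma L_trans {x y z : Set G × Set M} (hx : IsConcept J x) (hy : IsConcept J y)
    (hz : IsConcept J z) (hxy : x.1 ⊆ y.1 ∨ q x y) (hyz : y.1 ⊆ z.1 ∨ q y z) :
    x.1 ⊆ z.1 ∨ q x z := by
  rcases hxy with hxy | hxy <;> rcases hyz with hyz | hyz
  · exact Or.inl (hxy.trans hyz)
  · -- x.1 ⊆ y.1, q y z
    obtain ⟨h1, h2⟩ := incomp_of_q J q hirr htr hc hy hz hyz
    by_cases hxz : x.1 ⊆ z.1
    · exact Or.inl hxz
    right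
    have hzx : ¬ z.1 ⊆ x.1 := fun h => h2 (h.trans hxy)
    have hne : x ≠ z := by rintro rfl; exact h2 hxy
    have := (hc x z hx hz hne).1 ⟨hxz, hzx⟩
    rcases this with ⟨h, _⟩ | ⟨h, _⟩
    · exact h
    · exfalso
      have : q y x := htr y z x hy hz hx hyz h
      exact (incomp_of_q J q hirr htr hc hy hx this).2 hxy
  · -- q x y, y.1 ⊆ z.1
    obtain ⟨h1, h2⟩ := incomp_of_q J q hirr htr hc hx hy hxy
    by_cases hxz : x.1 ⊆ z.1
    · exact Or.inl hxz
    right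
    have hzx : ¬ z.1 ⊆ x.1 := fun h => h2 (hyz.trans h)
    have hne : x ≠ z := by rintro rfl; exact h2 hyz
    have := (hc x z hx hz hne).1 ⟨hxz, hzx⟩
    rcases this with ⟨h, _⟩ | ⟨h, _⟩
    · exact h
    · exfalso
      have : q z y := htr z x y hz hx hy h hxy
      exact (incomp_of_q J q hirr htr hc hz hy this).2 hyz
  · exact Or.inr (htr x y z hx hy hz hxy hyz)

include hc in
lemma L_total {x y : Set G × Set M} (hx : IsConcept J x) (hy : IsConcept J y) :
    (x.1 ⊆ y.1 ∨ q x y) ∨ (y.1 ⊆ x.1 ∨ q y x) := by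
  by_cases hxy : x.1 ⊆ y.1
  · exact Or.inl (Or.inl hxy)
  by_cases hyx : y.1 ⊆ x.1
  · exact Or.inr (Or.inl hyx)
  have hne : x ≠ y := by rintro rfl; exact hxy le_rfl
  rcases (hc x y hx hy hne).1 ⟨hxy, hyx⟩ with ⟨h, _⟩ | ⟨h, _⟩
  · exact Or.inl (Or.inr h)
  · exact Or.inr (Or.inr h)

include hirr htr hc in
/-- If there exist witnessing concepts for `(g,m)`, then the canonical object
and attribute concepts also witness it. -/
lemma canonical_wit {g : G} {m : M}
    (h : ∃ x y : Set G × Set M, IsConcept J x ∧ IsConcept J y ∧ g ∈ x.1 ∧ m ∈ y.2 ∧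
      (x.1 ⊆ y.1 ∨ q x y)) :
    (objC J g).1 ⊆ (attrC J m).1 ∨ q (objC J g) (attrC J m) := by
  obtain ⟨x, y, hx, hy, hg, hm, hxy⟩ := h
  have h1 : (objC J g).1 ⊆ x.1 ∨ q (objC J g) x := Or.inl (objC_min J hx hg)
  have h2 : y.1 ⊆ (attrC J m).1 ∨ q y (attrC J m) := Or.inl (attrC_max J hy hm)
  have hog := objC_concept J g
  have ham := attrC_concept J m
  exact L_trans J q hirr htr hc hog hy ham
    (L_trans J q hirr htr hc hog hx hy h1 hxy) h2

include hirr htr hc in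
lemma ferrers_of_conj :
    IsFerrers {p : G × M | ¬ ∃ x y : Set G × Set M,
      IsConcept J x ∧ IsConcept J y ∧ p.1 ∈ x.1 ∧ p.2 ∈ y.2 ∧
      (x.1 ⊆ y.1 ∨ q x y)} := by
  intro g h m n hgm hhn
  by_contra hcon
  rw [not_or] at hcon
  obtain ⟨hgn, hhm⟩ := hcon
  simp only [Set.mem_setOf_eq, not_not] at hgn hhm
  have w1 := canonical_wit J q hirr htr hc hgn
  have w2 := canonical_wit J q hirr htr hc hhm
  -- from (g,m) ∈ F : ¬ L (objC g) (attrC m), so by totality L (attrC m) (objC g)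
  have hogg := objC_concept J g
  have hogh := objC_concept J h
  have hamm := attrC_concept J m
  have hamn := attrC_concept J n
  have hgmL : ¬ ((objC J g).1 ⊆ (attrC J m).1 ∨ q (objC J g) (attrC J m)) := by
    intro hL
    exact hgm ⟨objC J g, attrC J m, hogg, hamm, mem_objC J g, mem_attrC J m, hL⟩
  have hhnL : ¬ ((objC J h).1 ⊆ (attrC J n).1 ∨ q (objC J h) (attrC J n)) := by
    intro hL
    exact hhn ⟨objC J h, attrC J n, hogh, hamn, mem_objC J h, mem_attrC J n, hL⟩
  have t1 : (attrC J n).1 ⊆ (objC J h).1 ∨ q (attrC J n) (objC J h) :=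
    (L_total J q hc hogh hamn).resolve_left hhnL
  have : (objC J g).1 ⊆ (attrC J m).1 ∨ q (objC J g) (attrC J m) :=
    L_trans J q hirr htr hc hogg hogh hamm
      (L_trans J q hirr htr hc hogg hamn hogh w1 t1) w2
  exact hgmL this

end Conj
end TF

/-- Let `≤` be the concept order (inclusion of extents) of the complement context
`(G, M, (G × M) \ I)` and let `≺` be a conjugate order for `≤`: an irreflexive,
transitive relation on the concepts such that two distinct concepts are
`≤`-incomparable iff exactly one of `x ≺ y`, `y ≺ x` holds.  Then the sets
`F1 = {(g,m) | ¬∃ concepts (A,B), (C,D) with g ∈ A, m ∈ D, (A,B) ≤ (C,D) ∨ (A,B) ≺ (C,D)}`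
and `F2` (with `≺` reversed) form an ordinal two-factorization of `(G, M, I)`. -/
theorem conjugate_order_gives_two_factorization {G M : Type*} (I : Set (G × M))
    (prec : Set G × Set M → Set G × Set M → Prop)
    (hirrefl : ∀ x, IsConcept Iᶜ x → ¬ prec x x)
    (htrans : ∀ x y z, IsConcept Iᶜ x → IsConcept Iᶜ y → IsConcept Iᶜ z →
      prec x y → prec y z → prec x z)
    (hconj : ∀ x y, IsConcept Iᶜ x → IsConcept Iᶜ y → x ≠ y →
      ((¬ x.1 ⊆ y.1 ∧ ¬ y.1 ⊆ x.1) ↔ Xor' (prec x y) (prec y x)))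
    (F1 F2 : Set (G × M))
    (hF1 : F1 = {p : G × M | ¬ ∃ x y : Set G × Set M,
      IsConcept Iᶜ x ∧ IsConcept Iᶜ y ∧ p.1 ∈ x.1 ∧ p.2 ∈ y.2 ∧
      (x.1 ⊆ y.1 ∨ prec x y)})
    (hF2 : F2 = {p : G × M | ¬ ∃ x y : Set G × Set M,
      IsConcept Iᶜ x ∧ IsConcept Iᶜ y ∧ p.1 ∈ x.1 ∧ p.2 ∈ y.2 ∧
      (x.1 ⊆ y.1 ∨ prec y x)}) :
    IsFerrers F1 ∧ IsFerrers F2 ∧ F1 ∪ F2 = I := by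
  set J := Iᶜ with hJ
  -- flipped relation also satisfies the hypotheses
  have hirrefl' : ∀ x, IsConcept J x → ¬ (fun a b => prec b a) x x := hirrefl
  have htrans' : ∀ x y z, IsConcept J x → IsConcept J y → IsConcept J z →
      (fun a b => prec b a) x y → (fun a b => prec b a) y z →
      (fun a b => prec b a) x z :=
    fun x y z hx hy hz h1 h2 => htrans z y x hz hy hx h2 h1
  have hconj' : ∀ x y, IsConcept J x → IsConcept J y → x ≠ y →
      ((¬ x.1 ⊆ y.1 ∧ ¬ y.1 ⊆ x.1) ↔
        Xor' ((fun a b => prec b a) x y) ((fun a b => prec b a) y x)) := by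
    intro x y hx hy hne
    rw [hconj x y hx hy hne]
    exact Iff.of_eq (xor_comm _ _)
  refine ⟨?_, ?_, ?_⟩
  · rw [hF1]; exact TF.ferrers_of_conj J prec hirrefl htrans hconj
  · rw [hF2]; exact TF.ferrers_of_conj J _ hirrefl' htrans' hconj'
  · ext ⟨g, m⟩
    constructor
    · -- F1 ∪ F2 ⊆ I
      intro hp
      by_contra hI
      have hJm : (g, m) ∈ J := hI
      have hsub : (TF.objC J g).1 ⊆ (TF.attrC J m).1 :=
        TF.objC_min J (TF.attrC_concept J m) ((TF.mem_attrC_iff J g m).2 hJm)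
      have hw : ∀ q : Set G × Set M → Set G × Set M → Prop,
          ∃ x y : Set G × Set M, IsConcept J x ∧ IsConcept J y ∧
            g ∈ x.1 ∧ m ∈ y.2 ∧ (x.1 ⊆ y.1 ∨ q x y) :=
        fun q => ⟨TF.objC J g, TF.attrC J m, TF.objC_concept J g,
          TF.attrC_concept J m, TF.mem_objC J g, TF.mem_attrC J m, Or.inl hsub⟩
      rcases hp with hp | hp
      · rw [hF1] at hp; exact hp (hw _)
      · rw [hF2] at hp; exact hp (hw _)
    · -- I ⊆ F1 ∪ F2
      intro hI
      by_contra hp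
      rw [Set.mem_union, not_or] at hp
      obtain ⟨h1, h2⟩ := hp
      rw [hF1] at h1; rw [hF2] at h2
      simp only [Set.mem_setOf_eq, not_not] at h1 h2
      have w1 := TF.canonical_wit J prec hirrefl htrans hconj h1
      have w2 := TF.canonical_wit J (fun a b => prec b a) hirrefl' htrans' hconj' h2
      have hnsub : ¬ (TF.objC J g).1 ⊆ (TF.attrC J m).1 := by
        intro hs
        have : g ∈ (TF.attrC J m).1 := hs (TF.mem_objC J g)
        exact ((TF.mem_attrC_iff J g m).1 this) hI
      have p1 : prec (TF.objC J g) (TF.attrC J m) := w1.resolve_left hnsub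
      have p2 : prec (TF.attrC J m) (TF.objC J g) := w2.resolve_left hnsub
      exact hirrefl _ (TF.objC_concept J g)
        (htrans _ _ _ (TF.objC_concept J g) (TF.attrC_concept J m)
          (TF.objC_concept J g) p1 p2)
end
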